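/- If n ≥ 2r, x = {x_1,...,x_r} ⊂ [0,2π) consists of r distinct points, all entries of a ∈ ℂ^r are nonzero, and y = Φ(n,x)·a where Φ(n,x) is the n×r matrix with entries Φ_{j,k} = e^{i j x_k} (j = 0,...,n−1), then there is no other set x' of r distinct points with x' ≠ x such that y = Φ(n,x')·a' for some a' ∈ ℂ^r. -/

import Mathlib

noncomputable section
open Complex Matrix

/-- Fourier matrix with entries `e^{i j x_k}`, `j = 0,…,n-1`. -/
def fourierMatrix (n r : ℕ) (x : Fin r → ℝ) : Matrix (Fin n) (Fin r) ℂ :=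
  fun j k => Complex.exp (Complex.I * (j : ℕ) * (x k))

/-- Spectral (operator) norm of a matrix. -/
def specNorm {m n : ℕ} (A : Matrix (Fin m) (Fin n) ℂ) : ℝ :=
  ‖LinearMap.toContinuousLinearMap (Matrix.toEuclideanLin A)‖

/-- Frobenius norm of a matrix. -/
def frobNorm {m n : ℕ} (A : Matrix (Fin m) (Fin n) ℂ) : ℝ :=
  Real.sqrt (∑ i, ∑ j, ‖A i j‖ ^ 2)

/-- Wrap-around (torus) distance `|u|_𝕋 = min_{ℓ∈ℤ} |u + 2πℓ|`. -/
def torusDist (u : ℝ) : ℝ := sInf {d | ∃ ℓ : ℤ, d = |u + 2 * Real.pi * ℓ|}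

/-- Max-norm of a vector. -/
def linftyNorm {r : ℕ} (v : Fin r → ℂ) : ℝ := ⨆ k, ‖v k‖

/-- Euclidean norm of a vector. -/
def euclNorm {n : ℕ} (u : Fin n → ℂ) : ℝ := Real.sqrt (∑ i, ‖u i‖ ^ 2)

/-- `k`-th largest singular value (1-indexed), via Courant–Fischer max–min. -/
def singularValue {m n : ℕ} (A : Matrix (Fin m) (Fin n) ℂ) (k : ℕ) : ℝ :=
  sSup {t | ∃ V : Submodule ℂ (EuclideanSpace ℂ (Fin n)),
    Module.finrank ℂ V = k ∧ ∀ v ∈ V, t * ‖v‖ ≤ ‖Matrix.toEuclideanLin A v‖}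

/-- Spectral norm of the sine of the principal angles between `U` and `W`:
`‖sin(U,W)‖₂ = sup_{w ∈ W, ‖w‖=1} ‖(I - P_U) w‖`. -/
def sinThetaNorm {n : ℕ} (U W : Submodule ℂ (EuclideanSpace ℂ (Fin n))) : ℝ :=
  sSup {t | ∃ w ∈ W, ‖w‖ = 1 ∧
    t = ‖w - (U.orthogonalProjectionOnto w : EuclideanSpace ℂ (Fin n))‖}

/-- Optimal-matching sup distance between two `r`-point configurations on the torus. -/
def matchDist {r : ℕ} (x y : Fin r → ℝ) : ℝ :=
  sInf {d | ∃ σ : Equiv.Perm (Fin r), d = ⨆ k, torusDist (x k - y (σ k))}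

/-- Minimax error for spectral estimation with `ℓ^∞`-bounded noise over the class
`P(16π/n, r)`. -/
def Xstar (n r : ℕ) (ε : ℝ) : ℝ :=
  sInf {e | ∃ ψ : (Fin n → ℂ) → (Fin r → ℝ),
    e = sSup {d | ∃ (x : Fin r → ℝ) (a : Fin r → ℂ) (z : Fin n → ℂ),
      (∀ j k, j ≠ k → torusDist (x j - x k) ≥ 16 * Real.pi / n) ∧
      (∀ k, 1 ≤ ‖a k‖ ∧ ‖a k‖ ≤ 10) ∧ (∀ j, ‖z j‖ ≤ ε) ∧
      d = matchDist x (ψ ((fourierMatrix n r x).mulVec a + z))}}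

/-! If two exponential sums `∑ a k z_k^j` and `∑ a' k w_k^j` agree for `j < n`, then so do
`∑ a k P(z_k)` and `∑ a' k P(w_k)` for every polynomial `P` of degree `< n`. With at most `n`
nodes in total, a Lagrange basis polynomial isolates any node `z_k` missing from the `w`'s and
forces `a k = 0`. So when all `a k ≠ 0`, every `z_k` is some `w_m`, and counting gives equality. -/

open Polynomial

theorem sum_mul_eval_eq_of_sum_mul_pow_eq {K ι ι' : Type*} [Field K] [Fintype ι] [Fintype ι']
    {n : ℕ} {z : ι → K} {a : ι → K} {w : ι' → K} {a' : ι' → K}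
    (hmom : ∀ j < n, ∑ k, a k * z k ^ j = ∑ k, a' k * w k ^ j)
    {P : K[X]} (hP : P.natDegree < n) :
    ∑ k, a k * P.eval (z k) = ∑ k, a' k * P.eval (w k) := by
  simp_rw [eval_eq_sum_range' hP, Finset.mul_sum]
  rw [Finset.sum_comm, Finset.sum_comm (s := Finset.univ)]
  refine Finset.sum_congr rfl fun j hj => ?_
  simp_rw [mul_left_comm _ (P.coeff j), ← Finset.mul_sum]
  rw [hmom j (Finset.mem_range.mp hj)]

theorem range_subset_range_of_sum_mul_pow_eq {K ι ι' : Type*} [Field K] [Fintype ι]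
    [Fintype ι'] {n : ℕ} {z : ι → K} {a : ι → K} {w : ι' → K} {a' : ι' → K}
    (hz : Function.Injective z) (ha : ∀ k, a k ≠ 0)
    (hn : Fintype.card ι + Fintype.card ι' ≤ n)
    (hmom : ∀ j < n, ∑ k, a k * z k ^ j = ∑ k, a' k * w k ^ j) :
    Set.range z ⊆ Set.range w := by
  classical
  rintro _ ⟨k, rfl⟩
  by_contra hk
  set S := Finset.univ.image z ∪ Finset.univ.image w
  have hzS : ∀ m, z m ∈ S := fun m => by simp [S]
  have hwS : ∀ m, w m ∈ S := fun m => by simp [S]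
  have hS : S.card ≤ n := calc
    S.card ≤ (Finset.univ.image z).card + (Finset.univ.image w).card := Finset.card_union_le _ _
    _ ≤ Fintype.card ι + Fintype.card ι' := add_le_add Finset.card_image_le Finset.card_image_le
    _ ≤ n := hn
  have hinj : Set.InjOn id (S : Set K) := Set.injOn_id _
  have hdeg : (Lagrange.basis S id (z k)).natDegree < n := by
    rw [Lagrange.natDegree_basis hinj (hzS k)]
    have := Finset.card_pos.mpr ⟨_, hzS k⟩
    omega
  have hbasis : ∀ s ∈ S, (Lagrange.basis S id (z k)).eval s = if s = z k then 1 else 0 := by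
    intro s hs
    split_ifs with h
    · exact h ▸ Lagrange.eval_basis_self (v := id) hinj hs
    · exact Lagrange.eval_basis_of_ne (v := id) (Ne.symm h) hs
  have key := sum_mul_eval_eq_of_sum_mul_pow_eq hmom hdeg
  rw [Finset.sum_eq_single k, Finset.sum_eq_zero] at key
  · simp only [hbasis _ (hzS k), if_pos, mul_one] at key
    exact ha k key
  · exact fun m _ => by rw [hbasis _ (hwS m), if_neg fun h => hk ⟨m, h⟩, mul_zero]
  · exact fun m _ hm => by rw [hbasis _ (hzS m), if_neg (hz.ne hm), mul_zero]
  · simp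

theorem Set.range_eq_of_injective_of_range_subset {α ι : Type*} [Finite ι] {f g : ι → α}
    (hf : Function.Injective f) (h : Set.range f ⊆ Set.range g) : Set.range f = Set.range g := by
  refine Set.eq_of_subset_of_ncard_le h ?_ (Set.finite_range g)
  rw [Set.ncard_range_of_injective hf, ← Set.image_univ, ← Set.ncard_univ ι]
  exact Set.ncard_image_le Set.finite_univ

theorem fourierMatrix_mulVec_apply {n r : ℕ} (x : Fin r → ℝ) (a : Fin r → ℂ) (j : Fin n) :
    (fourierMatrix n r x).mulVec a j = ∑ k, a k * Complex.exp (Complex.I * x k) ^ (j : ℕ) := by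
  simp only [Matrix.mulVec, dotProduct, fourierMatrix, ← Complex.exp_nat_mul]
  exact Finset.sum_congr rfl fun k _ => by ring_nf

theorem stmt0_general {n r : ℕ} (hn : n ≥ 2 * r) (x : Fin r → ℝ)
    (hx : ∀ j k : Fin r, j ≠ k → Complex.exp (Complex.I * x j) ≠ Complex.exp (Complex.I * x k))
    (a : Fin r → ℂ) (ha : ∀ k, a k ≠ 0)
    (y : Fin n → ℂ) (hy : y = (fourierMatrix n r x).mulVec a)
    (x' : Fin r → ℝ)
    (a' : Fin r → ℂ) (hy' : y = (fourierMatrix n r x').mulVec a') :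
    (Set.range fun k => Complex.exp (Complex.I * x k)) =
      Set.range fun k => Complex.exp (Complex.I * x' k) := by
  have hinj : Function.Injective fun k => Complex.exp (Complex.I * x k) :=
    fun j k h => by_contra fun hne => hx j k hne h
  have hmom : ∀ j < n, ∑ k, a k * Complex.exp (Complex.I * x k) ^ j =
      ∑ k, a' k * Complex.exp (Complex.I * x' k) ^ j := fun j hj => by
    rw [← fourierMatrix_mulVec_apply x a ⟨j, hj⟩, ← fourierMatrix_mulVec_apply x' a' ⟨j, hj⟩,
      ← hy, ← hy']
  refine Set.range_eq_of_injective_of_range_subset hinj ?_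
  exact range_subset_range_of_sum_mul_pow_eq hinj ha (by simp only [Fintype.card_fin]; omega) hmom

/-- A vector in the range of a Fourier matrix with all coefficients nonzero
determines the frequency set (as a subset of the torus) uniquely when `n ≥ 2r`. -/
theorem stmt0 {n r : ℕ} (hn : n ≥ 2 * r) (x : Fin r → ℝ)
    (hx : ∀ j k : Fin r, j ≠ k → Complex.exp (Complex.I * x j) ≠ Complex.exp (Complex.I * x k))
    (a : Fin r → ℂ) (ha : ∀ k, a k ≠ 0)
    (y : Fin n → ℂ) (hy : y = (fourierMatrix n r x).mulVec a)
    (x' : Fin r → ℝ)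
    (hx' : ∀ j k : Fin r, j ≠ k → Complex.exp (Complex.I * x' j) ≠ Complex.exp (Complex.I * x' k))
    (a' : Fin r → ℂ) (hy' : y = (fourierMatrix n r x').mulVec a') :
    (Set.range fun k => Complex.exp (Complex.I * x k)) =
      Set.range fun k => Complex.exp (Complex.I * x' k) :=
  stmt0_general hn x hx a ha y hy x' a' hy'
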